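/- arXiv:1003.4785 — 2 statements merged into one kernel-verified Lean document; each statement's English description precedes it below -/
import Mathlib

section
/- With the one-dimensional bound B((1),α,γ₁) = γ₁ / (b^{(2α+1)m}(b^{2α}−1)), for every λ with 1/(2α+1) < λ ≤ 1 one has B((1),α,γ₁) ≤ (b^m − 1)^{−1/λ} · (1 + γ₁^λ (b^{2α}−1)^{−λ})^{1/λ}. -/
/-- The one-dimensional bound `B((1),α,γ₁) = γ₁ /(b^{(2α+1)m}(b^{2α}−1))` satisfies
`B((1),α,γ₁) ≤ (bᵐ − 1)^{−1/λ} (1 + γ₁^λ (b^{2α}−1)^{−λ})^{1/λ}` for all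
`1/(2α+1) < λ ≤ 1`. -/
theorem one_dim_bound (b m : ℕ) (hb : b.Prime) (hm : 1 ≤ m)
    (α γ₁ lam : ℝ) (hα : 0 < α) (hα1 : α ≤ 1) (hγ : 0 < γ₁)
    (hlam1 : 1 / (2 * α + 1) < lam) (hlam2 : lam ≤ 1) :
    γ₁ / ((b : ℝ) ^ ((2 * α + 1) * (m : ℝ)) * ((b : ℝ) ^ (2 * α) - 1)) ≤
      ((b : ℝ) ^ (m : ℕ) - 1) ^ (-(1 / lam)) *
        (1 + γ₁ ^ lam * ((b : ℝ) ^ (2 * α) - 1) ^ (-lam)) ^ (1 / lam) := by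
  have hb2 : (2:ℝ) ≤ b := by exact_mod_cast hb.two_le
  have hb1 : (1:ℝ) < b := by linarith
  have hbpos : (0:ℝ) < b := by linarith
  have hexp : (0:ℝ) < 2*α + 1 := by linarith
  have hlam0 : 0 < lam := lt_trans (by positivity) hlam1
  have hX : (1:ℝ) < (b:ℝ)^(2*α) :=
    (Real.one_lt_rpow_iff_of_pos hbpos).mpr (Or.inl ⟨hb1, by linarith⟩)
  have hXpos : (0:ℝ) < (b:ℝ)^(2*α) - 1 := by linarith
  set X : ℝ := (b:ℝ)^(2*α) - 1 with hXdef
  have hbm1 : (1:ℝ) ≤ (b:ℝ)^(m:ℕ) - 1 := by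
    have h2 : (2:ℝ) ≤ (b:ℝ)^(m:ℕ) := by
      calc (2:ℝ) = 2^1 := by norm_num
        _ ≤ (2:ℝ)^(m:ℕ) := pow_le_pow_right₀ (by norm_num) hm
        _ ≤ (b:ℝ)^(m:ℕ) := pow_le_pow_left₀ (by norm_num) hb2 m
    linarith
  have hbmpos : (0:ℝ) < (b:ℝ)^(m:ℕ) - 1 := by linarith
  have hApos : (0:ℝ) < (b:ℝ)^((2*α+1)*(m:ℝ)) := Real.rpow_pos_of_pos hbpos _
  have hinv : 1/lam ≤ 2*α+1 := by
    rw [div_le_iff₀ hlam0]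
    rw [div_lt_iff₀ hexp] at hlam1
    nlinarith
  have key : ((b:ℝ)^(m:ℕ) - 1)^(1/lam) ≤ (b:ℝ)^((2*α+1)*(m:ℝ)) := by
    calc ((b:ℝ)^(m:ℕ) - 1)^(1/lam) ≤ ((b:ℝ)^(m:ℕ) - 1)^(2*α+1) :=
          Real.rpow_le_rpow_of_exponent_le hbm1 hinv
      _ ≤ ((b:ℝ)^(m:ℕ))^(2*α+1) :=
          Real.rpow_le_rpow (by linarith) (by linarith) (le_of_lt hexp)
      _ = (b:ℝ)^((2*α+1)*(m:ℝ)) := by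
          rw [← Real.rpow_natCast (b:ℝ) m, ← Real.rpow_mul (le_of_lt hbpos), mul_comm]
  have h1 : 1 / (b:ℝ)^((2*α+1)*(m:ℝ)) ≤ ((b:ℝ)^(m:ℕ) - 1)^(-(1/lam)) := by
    rw [Real.rpow_neg (le_of_lt hbmpos), ← one_div]
    exact one_div_le_one_div_of_le (Real.rpow_pos_of_pos hbmpos _) key
  have e1 : (γ₁^lam)^(1/lam) = γ₁ := by
    rw [← Real.rpow_mul hγ.le, mul_one_div, div_self hlam0.ne', Real.rpow_one]
  have e2 : (X^(-lam))^(1/lam) = X⁻¹ := by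
    rw [← Real.rpow_mul hXpos.le, neg_mul, mul_one_div, div_self hlam0.ne',
      Real.rpow_neg_one]
  have h2 : γ₁ / X ≤ (1 + γ₁^lam * X^(-lam))^(1/lam) := by
    have heq : γ₁ / X = (γ₁^lam * X^(-lam))^(1/lam) := by
      rw [Real.mul_rpow (by positivity) (by positivity), e1, e2, div_eq_mul_inv]
    rw [heq]
    exact Real.rpow_le_rpow (by positivity) (le_add_of_nonneg_left zero_le_one)
      (by positivity)
  have hLHS : γ₁ / ((b:ℝ)^((2*α+1)*(m:ℝ)) * X)
      = (1 / (b:ℝ)^((2*α+1)*(m:ℝ))) * (γ₁ / X) := by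
    field_simp
  rw [hLHS]
  exact mul_le_mul h1 h2 (by positivity) (by positivity)
end

section
/- For b ≥ 2, m ≥ 1 and N with b^{m−1} < 2N ≤ b^m, the function f = γ₁ b^{−αm} Σ_{a=0}^{b^m−1} ξ_a g_a (ξ_a ∈ {±1}, g_a the indicator of [a/b^m,(a+1)/b^m)) satisfies sup_{1≤l≤m} b^{αl}·σ_l(f) ≤ γ₁, where σ_l(f)² = Σ_{b^{l−1}≤k<b^l} |f̂(k)|² and f̂(k) are the Walsh coefficients of f; moreover σ_l(f) = 0 for l > m. -/
open Finset MeasureTheory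

/-- The `k`-th Walsh function in base `b`. -/
noncomputable def walsh (b k : ℕ) (x : ℝ) : ℂ :=
  Complex.exp (2 * Real.pi * Complex.I *
    (∑ i ∈ Finset.range (Nat.log b k + 1),
      ((⌊x * (b : ℝ) ^ (i + 1)⌋ % (b : ℤ) : ℤ) : ℂ) * ((k / b ^ i % b : ℕ) : ℂ)) / (b : ℂ))

/-- The function `f = γ₁ b^{−αm} Σ_{a=0}^{bᵐ−1} ξ_a 𝟙_{[a/bᵐ,(a+1)/bᵐ)}`. -/
noncomputable def fStep (b m : ℕ) (α γ₁ : ℝ) (ξ : ℕ → ℝ) (x : ℝ) : ℝ :=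
  γ₁ * (b : ℝ) ^ (-(α * (m : ℝ))) *
    ∑ a ∈ Finset.range (b ^ m), ξ a *
      Set.indicator (Set.Ico ((a : ℝ) / (b : ℝ) ^ m) (((a : ℝ) + 1) / (b : ℝ) ^ m))
        (fun _ => (1 : ℝ)) x

/-- The `k`-th Walsh coefficient `f̂(k) = ∫₀¹ f(x) conj(wal_k(x)) dx`. -/
noncomputable def fHat (b m : ℕ) (α γ₁ : ℝ) (ξ : ℕ → ℝ) (k : ℕ) : ℂ :=
  ∫ x in (0 : ℝ)..1, (fStep b m α γ₁ ξ x : ℂ) * (starRingEnd ℂ) (walsh b k x)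

/-- additive character e(t) = exp(2πi t / b) -/
noncomputable def ee (b t : ℕ) : ℂ := Complex.exp (2 * Real.pi * Complex.I * t / b)

/-- digit pairing sum -/
def dsum (b n k c : ℕ) : ℕ := ∑ i ∈ Finset.range n, (c / b ^ (n - 1 - i) % b) * (k / b ^ i % b)

lemma ee_add (b s t : ℕ) : ee b (s + t) = ee b s * ee b t := by
  unfold ee; rw [← Complex.exp_add]; congr 1; push_cast; ring

lemma ee_zero (b : ℕ) : ee b 0 = 1 := by simp [ee]

lemma ee_mul_base (b : ℕ) (hb : b ≠ 0) (t : ℕ) : ee b (b * t) = 1 := by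
  unfold ee
  rw [Complex.exp_eq_one_iff]
  refine ⟨t, ?_⟩
  have : (b : ℂ) ≠ 0 := Nat.cast_ne_zero.2 hb
  field_simp
  push_cast
  ring

lemma ee_ne_zero (b t : ℕ) : ee b t ≠ 0 := Complex.exp_ne_zero _

lemma conj_ee_mul (b t : ℕ) : (starRingEnd ℂ) (ee b t) * ee b t = 1 := by
  unfold ee
  rw [← Complex.exp_conj, ← Complex.exp_add]
  have : (starRingEnd ℂ) (2 * ↑Real.pi * Complex.I * ↑t / ↑b) =
      -(2 * ↑Real.pi * Complex.I * ↑t / ↑b) := by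
    simp [map_div₀, map_mul, Complex.conj_I, Complex.conj_ofReal, map_ofNat]
    ring
  rw [this, neg_add_cancel, Complex.exp_zero]

lemma conj_ee (b : ℕ) (hb : 1 ≤ b) (t : ℕ) :
    (starRingEnd ℂ) (ee b t) = ee b ((b - 1) * t) := by
  have h1 : ee b ((b - 1) * t) * ee b t = 1 := by
    rw [← ee_add]
    have : (b - 1) * t + t = b * t := by
      have : b - 1 + 1 = b := by omega
      calc (b - 1) * t + t = (b - 1 + 1) * t := by ring
        _ = b * t := by rw [this]
    rw [this, ee_mul_base b (by omega)]
  have h2 := conj_ee_mul b t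
  exact mul_right_cancel₀ (ee_ne_zero b t) (h2.trans h1.symm)

lemma ee_pow (b t j : ℕ) : ee b (j * t) = (ee b t) ^ j := by
  induction j with
  | zero => simp [ee_zero]
  | succ n ih => rw [add_mul, one_mul, ee_add, ih, pow_succ]

lemma ee_ne_one (b : ℕ) (hb : 2 ≤ b) (t : ℕ) (ht : t % b ≠ 0) : ee b t ≠ 1 := by
  intro h
  rw [ee, Complex.exp_eq_one_iff] at h
  obtain ⟨n, hn⟩ := h
  have hb0 : (b : ℂ) ≠ 0 := Nat.cast_ne_zero.2 (by omega)
  have hpi : (2 * (Real.pi : ℂ) * Complex.I) ≠ 0 := by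
    simp [Real.pi_ne_zero, Complex.I_ne_zero]
  have h2 : (t : ℂ) = n * b := by
    field_simp at hn
    have : 2 * (Real.pi:ℂ) * Complex.I * t = 2 * (Real.pi:ℂ) * Complex.I * (n * b) := by
      rw [hn]; ring
    exact mul_left_cancel₀ hpi this
  have h3 : (t : ℤ) = n * b := by exact_mod_cast h2
  have : (b : ℤ) ∣ (t : ℤ) := ⟨n, by rw [h3]; ring⟩
  have hd : b ∣ t := by exact_mod_cast this
  exact ht (Nat.eq_zero_of_dvd_of_lt (Nat.dvd_sub hd (Nat.dvd_refl b)) (by omega) |> fun _ => Nat.mod_eq_zero_of_dvd hd)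
  
lemma sum_ee (b : ℕ) (hb : 2 ≤ b) (t : ℕ) :
    (∑ j ∈ Finset.range b, ee b (t * j)) = if t % b = 0 then (b : ℂ) else 0 := by
  by_cases h : t % b = 0
  · simp only [h, if_true]
    have : ∀ j ∈ Finset.range b, ee b (t * j) = 1 := by
      intro j _
      obtain ⟨s, hs⟩ := Nat.dvd_of_mod_eq_zero h
      rw [hs, mul_assoc, ee_mul_base b (by omega)]
    rw [Finset.sum_congr rfl this]
    simp
  · simp only [h, if_false]
    have hz : ee b t ≠ 1 := ee_ne_one b hb t h
    have : ∀ j ∈ Finset.range b, ee b (t * j) = (ee b t) ^ j := by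
      intro j _; rw [mul_comm, ee_pow]
    rw [Finset.sum_congr rfl this, geom_sum_eq hz]
    have : (ee b t) ^ b = 1 := by rw [← ee_pow]; exact ee_mul_base b (by omega) t
    rw [this, sub_self, zero_div]

lemma sum_range_mul (f : ℕ → ℂ) (p q : ℕ) :
    ∑ k ∈ Finset.range (p * q), f k = ∑ j ∈ Finset.range p, ∑ r ∈ Finset.range q, f (j * q + r) := by
  induction p with
  | zero => simp
  | succ p ih =>
      rw [Nat.succ_mul, Finset.sum_range_add, ih, Finset.sum_range_succ]

lemma digit_low (b n i j k' : ℕ) (hb : 1 ≤ b) (hi : i < n) :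
    (j * b ^ n + k') / b ^ i % b = k' / b ^ i % b := by
  have hn : n - i + i = n := by omega
  have h1 : j * b ^ n + k' = k' + j * b ^ (n - i) * b ^ i := by
    rw [mul_assoc, ← pow_add, hn, add_comm]
  rw [h1, Nat.add_mul_div_right _ _ (Nat.pow_pos (n := i) (show 0 < b by omega))]
  have hni : n - i - 1 + 1 = n - i := by omega
  have h2 : j * b ^ (n - i) = j * b ^ (n - i - 1) * b := by
    rw [mul_assoc, ← pow_succ, hni]
  rw [h2, Nat.add_mul_mod_self_right]

lemma digit_top (b n j k' : ℕ) (hj : j < b) (hk : k' < b ^ n) :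
    (j * b ^ n + k') / b ^ n % b = j := by
  have hbn : 0 < b ^ n := Nat.pow_pos (n := n) (show 0 < b by omega)
  rw [add_comm, Nat.add_mul_div_right _ _ hbn, Nat.div_eq_of_lt hk, zero_add,
    Nat.mod_eq_of_lt hj]

lemma prod_formula (b : ℕ) (hb : 2 ≤ b) (n : ℕ) (t : ℕ → ℕ) :
    ∑ k ∈ Finset.range (b ^ n), ee b (∑ i ∈ Finset.range n, t i * (k / b ^ i % b)) =
      ∏ i ∈ Finset.range n, ∑ j ∈ Finset.range b, ee b (t i * j) := by
  induction n generalizing t with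
  | zero => simp [ee_zero]
  | succ n ih =>
      have hbn : b ^ (n + 1) = b * b ^ n := by rw [pow_succ, mul_comm]
      rw [hbn, sum_range_mul]
      have key : ∀ j ∈ Finset.range b, ∀ k' ∈ Finset.range (b ^ n),
          ee b (∑ i ∈ Finset.range (n + 1), t i * ((j * b ^ n + k') / b ^ i % b)) =
          ee b (∑ i ∈ Finset.range n, t i * (k' / b ^ i % b)) * ee b (t n * j) := by
        intro j hj k' hk'
        rw [Finset.mem_range] at hj hk'
        rw [Finset.sum_range_succ, ee_add]
        congr 2
        · apply Finset.sum_congr rfl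
          intro i hi
          rw [Finset.mem_range] at hi
          rw [digit_low b n i j k' (by omega) hi]
        · rw [digit_top b n j k' hj hk']
      calc ∑ j ∈ Finset.range b, ∑ k' ∈ Finset.range (b ^ n),
              ee b (∑ i ∈ Finset.range (n + 1), t i * ((j * b ^ n + k') / b ^ i % b))
          = ∑ j ∈ Finset.range b, ∑ k' ∈ Finset.range (b ^ n),
              ee b (∑ i ∈ Finset.range n, t i * (k' / b ^ i % b)) * ee b (t n * j) := by
            refine Finset.sum_congr rfl fun j hj => Finset.sum_congr rfl fun k' hk' => key j hj k' hk'
        _ = (∑ k' ∈ Finset.range (b ^ n), ee b (∑ i ∈ Finset.range n, t i * (k' / b ^ i % b))) *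
              (∑ j ∈ Finset.range b, ee b (t n * j)) := by
            rw [Finset.sum_comm]
            rw [← Finset.sum_mul_sum]
        _ = (∏ i ∈ Finset.range n, ∑ j ∈ Finset.range b, ee b (t i * j)) *
              (∑ j ∈ Finset.range b, ee b (t n * j)) := by rw [ih]
        _ = ∏ i ∈ Finset.range (n + 1), ∑ j ∈ Finset.range b, ee b (t i * j) := by
            rw [Finset.prod_range_succ]

lemma digit_cancel (b d d' : ℕ) (hb : 2 ≤ b) (hd : d < b) (hd' : d' < b) :
    (d + (b - 1) * d') % b = 0 ↔ d = d' := by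
  constructor
  · intro h
    obtain ⟨q, hq⟩ := Nat.dvd_of_mod_eq_zero h
    have key : d + (b - 1) * d' + d' = d + b * d' := by
      have h1 : (b - 1) * d' + d' = b * d' := by
        have h2 : b - 1 + 1 = b := by omega
        calc (b - 1) * d' + d' = (b - 1 + 1) * d' := by ring
          _ = b * d' := by rw [h2]
      omega
    have e1 : (d + (b - 1) * d' + d') % b = d' % b := by rw [hq, Nat.mul_add_mod]
    have e2 : (d + b * d') % b = d % b := by rw [Nat.add_mul_mod_self_left]
    rw [key, e2, Nat.mod_eq_of_lt hd] at e1
    rw [Nat.mod_eq_of_lt hd'] at e1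
    omega
  · intro h
    subst h
    have h1 : d + (b - 1) * d = b * d := by
      have h2 : b - 1 + 1 = b := by omega
      calc d + (b - 1) * d = (b - 1 + 1) * d := by ring
        _ = b * d := by rw [h2]
    rw [h1, Nat.mul_mod_right]

lemma digits_inj (b : ℕ) (hb : 2 ≤ b) : ∀ n a a', a < b ^ n → a' < b ^ n →
    (∀ p, p < n → a / b ^ p % b = a' / b ^ p % b) → a = a' := by
  intro n
  induction n with
  | zero => intro a a' ha ha' _; simp at ha ha'; omega
  | succ n ih =>
      intro a a' ha ha' h
      have h0 : a % b = a' % b := by simpa using h 0 (by omega)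
      have hdiv : a / b = a' / b := by
        apply ih
        · exact Nat.div_lt_of_lt_mul (by rw [← pow_succ']; exact ha)
        · exact Nat.div_lt_of_lt_mul (by rw [← pow_succ']; exact ha')
        · intro p hp
          have hh := h (p + 1) (by omega)
          rw [Nat.div_div_eq_div_mul, Nat.div_div_eq_div_mul]
          rwa [pow_succ'] at hh
      rw [← Nat.div_add_mod a b, ← Nat.div_add_mod a' b, hdiv, h0]

lemma orth (b : ℕ) (hb : 2 ≤ b) (n a a' : ℕ) (ha : a < b ^ n) (ha' : a' < b ^ n) :
    ∑ k ∈ Finset.range (b ^ n), ee b (dsum b n k a) * (starRingEnd ℂ) (ee b (dsum b n k a')) =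
      if a = a' then ((b : ℂ) ^ n) else 0 := by
  have step : ∀ k, ee b (dsum b n k a) * (starRingEnd ℂ) (ee b (dsum b n k a')) =
      ee b (∑ i ∈ Finset.range n,
        (a / b ^ (n - 1 - i) % b + (b - 1) * (a' / b ^ (n - 1 - i) % b)) * (k / b ^ i % b)) := by
    intro k
    rw [conj_ee b (by omega), ← ee_add]
    congr 1
    unfold dsum
    rw [Finset.mul_sum, ← Finset.sum_add_distrib]
    apply Finset.sum_congr rfl
    intro i _
    ring
  simp only [step]
  rw [prod_formula b hb n]
  by_cases h : a = a'
  · subst h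
    have : ∀ i ∈ Finset.range n, (∑ j ∈ Finset.range b,
        ee b ((a / b ^ (n - 1 - i) % b + (b - 1) * (a / b ^ (n - 1 - i) % b)) * j)) = (b : ℂ) := by
      intro i _
      rw [sum_ee b hb]
      rw [if_pos ((digit_cancel b _ _ hb (Nat.mod_lt _ (by omega)) (Nat.mod_lt _ (by omega))).2 rfl)]
    rw [Finset.prod_congr rfl this, if_pos rfl, Finset.prod_const, Finset.card_range]
  · rw [if_neg h]
    have : ∃ p, p < n ∧ a / b ^ p % b ≠ a' / b ^ p % b := by
      by_contra hc
      push_neg at hc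
      exact h (digits_inj b hb n a a' ha ha' hc)
    obtain ⟨p, hp, hne⟩ := this
    apply Finset.prod_eq_zero (Finset.mem_range.2 (show n - 1 - p < n by omega))
    have hnp : n - 1 - (n - 1 - p) = p := by omega
    rw [hnp, sum_ee b hb, if_neg]
    rw [digit_cancel b _ _ hb (Nat.mod_lt _ (by omega)) (Nat.mod_lt _ (by omega))]
    exact hne

lemma floor_eval (b n i c : ℕ) (hb : 2 ≤ b) (hi : i + 1 ≤ n) (x : ℝ)
    (hx : x ∈ Set.Ico ((c : ℝ) / (b : ℝ) ^ n) (((c : ℝ) + 1) / (b : ℝ) ^ n)) :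
    ⌊x * (b : ℝ) ^ (i + 1)⌋ = (c / b ^ (n - 1 - i) : ℕ) := by
  obtain ⟨hx1, hx2⟩ := hx
  set q : ℕ := b ^ (n - 1 - i) with hq
  have hq0 : 0 < q := Nat.pow_pos (show 0 < b by omega)
  have hqR : (0 : ℝ) < (q : ℝ) := by exact_mod_cast hq0
  have hbR : (0 : ℝ) < (b : ℝ) ^ (i + 1) := by positivity
  have hbn : ((b : ℝ) ^ n) = (b : ℝ) ^ (i + 1) * (q : ℝ) := by
    rw [hq]
    push_cast
    rw [← pow_add]
    congr 1
    omega
  have hbn0 : (0 : ℝ) < (b : ℝ) ^ n := by positivity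
  set d : ℕ := c / q with hd
  rw [Int.floor_eq_iff]
  constructor
  · have h1 : (d : ℝ) * q ≤ c := by exact_mod_cast Nat.div_mul_le_self c q
    have h2 : (c : ℝ) / (b : ℝ) ^ n * (b : ℝ) ^ (i + 1) = (c : ℝ) / q := by
      rw [hbn]; field_simp
    calc (d : ℝ) ≤ (c : ℝ) / q := by rw [le_div_iff₀ hqR]; exact h1
      _ = (c : ℝ) / (b : ℝ) ^ n * (b : ℝ) ^ (i + 1) := h2.symm
      _ ≤ x * (b : ℝ) ^ (i + 1) := by
          apply mul_le_mul_of_nonneg_right hx1 (le_of_lt hbR)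
  · have h1 : (c : ℝ) + 1 ≤ ((d : ℝ) + 1) * q := by
      have : c + 1 ≤ (d + 1) * q := by
        calc c + 1 ≤ q * d + q := by
              have h3 := Nat.mod_lt c hq0
              have h4 : q * d + c % q = c := by rw [hd]; exact Nat.div_add_mod c q
              omega
          _ = (d + 1) * q := by ring
      exact_mod_cast this
    have h2 : ((c : ℝ) + 1) / (b : ℝ) ^ n * (b : ℝ) ^ (i + 1) = ((c : ℝ) + 1) / q := by
      rw [hbn]; field_simp
    calc x * (b : ℝ) ^ (i + 1) < ((c : ℝ) + 1) / (b : ℝ) ^ n * (b : ℝ) ^ (i + 1) := by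
          apply mul_lt_mul_of_pos_right hx2 hbR
      _ = ((c : ℝ) + 1) / q := h2
      _ ≤ (d : ℝ) + 1 := by rw [div_le_iff₀ hqR]; linarith [h1]

lemma walsh_eval (b n k c : ℕ) (hb : 2 ≤ b) (hn : 1 ≤ n) (hk : k < b ^ n) (x : ℝ)
    (hx : x ∈ Set.Ico ((c : ℝ) / (b : ℝ) ^ n) (((c : ℝ) + 1) / (b : ℝ) ^ n)) :
    walsh b k x = ee b (dsum b n k c) := by
  have hL : Nat.log b k + 1 ≤ n := by
    rcases Nat.eq_zero_or_pos k with hk0 | hk0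
    · simp [hk0]; omega
    · have := Nat.log_lt_of_lt_pow (by omega : k ≠ 0) hk
      omega
  unfold walsh
  have hsum : (∑ i ∈ Finset.range (Nat.log b k + 1),
      ((⌊x * (b : ℝ) ^ (i + 1)⌋ % (b : ℤ) : ℤ) : ℂ) * ((k / b ^ i % b : ℕ) : ℂ)) =
      ((dsum b n k c : ℕ) : ℂ) := by
    have hext : (∑ i ∈ Finset.range (Nat.log b k + 1),
        ((⌊x * (b : ℝ) ^ (i + 1)⌋ % (b : ℤ) : ℤ) : ℂ) * ((k / b ^ i % b : ℕ) : ℂ)) =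
        (∑ i ∈ Finset.range n,
        ((⌊x * (b : ℝ) ^ (i + 1)⌋ % (b : ℤ) : ℤ) : ℂ) * ((k / b ^ i % b : ℕ) : ℂ)) := by
      apply Finset.sum_subset (Finset.range_subset_range.2 hL)
      intro i _ hi
      rw [Finset.mem_range] at hi
      push_neg at hi
      have : k / b ^ i = 0 := by
        apply Nat.div_eq_of_lt
        calc k < b ^ (Nat.log b k + 1) := Nat.lt_pow_succ_log_self (by omega) k
          _ ≤ b ^ i := Nat.pow_le_pow_right (by omega) hi
      rw [this]
      simp
    rw [hext]
    unfold dsum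
    rw [Nat.cast_sum]
    apply Finset.sum_congr rfl
    intro i hi
    rw [Finset.mem_range] at hi
    rw [floor_eval b n i c hb (by omega) x hx]
    rw [(Int.natCast_mod (c / b ^ (n - 1 - i)) b).symm, Int.cast_natCast, Nat.cast_mul]
  rw [hsum]
  rfl

lemma walsh_measurable (b k : ℕ) : Measurable (walsh b k) := by
  unfold walsh
  apply Complex.measurable_exp.comp
  apply Measurable.div_const
  apply Measurable.const_mul
  apply Finset.measurable_sum
  intro i _
  apply Measurable.mul_const
  have h1 : Measurable fun x : ℝ => ⌊x * (b : ℝ) ^ (i + 1)⌋ :=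
    Measurable.floor (measurable_id.mul_const _)
  exact (measurable_from_top (f := fun z : ℤ => ((z % (b : ℤ) : ℤ) : ℂ))).comp h1

lemma abs_walsh (b k : ℕ) (x : ℝ) : ‖walsh b k x‖ = 1 := by
  unfold walsh
  set T : ℤ := ∑ i ∈ Finset.range (Nat.log b k + 1),
    (⌊x * (b : ℝ) ^ (i + 1)⌋ % (b : ℤ)) * (k / b ^ i % b : ℕ) with hT
  have hS : (∑ i ∈ Finset.range (Nat.log b k + 1),
      ((⌊x * (b : ℝ) ^ (i + 1)⌋ % (b : ℤ) : ℤ) : ℂ) * ((k / b ^ i % b : ℕ) : ℂ)) = ((T : ℤ) : ℂ) := by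
    rw [hT, Int.cast_sum]
    apply Finset.sum_congr rfl
    intro i _
    rw [Int.cast_mul, Int.cast_natCast]
  rw [hS]
  have : 2 * (Real.pi : ℂ) * Complex.I * ((T : ℤ) : ℂ) / (b : ℂ) =
      ((2 * Real.pi * (T : ℝ) / (b : ℝ) : ℝ) : ℂ) * Complex.I := by
    push_cast
    ring
  rw [this, Complex.norm_exp_ofReal_mul_I]

lemma walsh_intervalIntegrable (b k : ℕ) (u v : ℝ) :
    IntervalIntegrable (fun x => (starRingEnd ℂ) (walsh b k x)) volume u v := by
  rw [intervalIntegrable_iff]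
  refine Integrable.mono' (g := fun _ => (1 : ℝ)) ?_ ?_ ?_
  · exact integrableOn_const measure_Ioc_lt_top.ne
  · exact (show Measurable fun x => star (walsh b k x) from
      continuous_star.measurable.comp (walsh_measurable b k)).aestronglyMeasurable.restrict
  · filter_upwards with x
    simp only [RCLike.norm_conj]
    rw [abs_walsh]

lemma integral_walsh (b n k c : ℕ) (hb : 2 ≤ b) (hn : 1 ≤ n) (hk : k < b ^ n) :
    ∫ x in Set.Ioc ((c : ℝ) / (b : ℝ) ^ n) (((c : ℝ) + 1) / (b : ℝ) ^ n),
      (starRingEnd ℂ) (walsh b k x) =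
      (((b : ℝ) ^ n)⁻¹ : ℝ) • (starRingEnd ℂ) (ee b (dsum b n k c)) := by
  have hbn : (0 : ℝ) < (b : ℝ) ^ n := by positivity
  rw [MeasureTheory.integral_Ioc_eq_integral_Ioo]
  have heq : ∀ x ∈ Set.Ioo ((c : ℝ) / (b : ℝ) ^ n) (((c : ℝ) + 1) / (b : ℝ) ^ n),
      (starRingEnd ℂ) (walsh b k x) = (starRingEnd ℂ) (ee b (dsum b n k c)) := by
    intro x hx
    rw [walsh_eval b n k c hb hn hk x ⟨le_of_lt hx.1, hx.2⟩]
  rw [setIntegral_congr_fun measurableSet_Ioo heq, setIntegral_const]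
  congr 1
  rw [measureReal_def, Real.volume_Ioo]
  have : ((c : ℝ) + 1) / (b : ℝ) ^ n - (c : ℝ) / (b : ℝ) ^ n = ((b : ℝ) ^ n)⁻¹ := by
    field_simp
    ring
  rw [this, ENNReal.toReal_ofReal (by positivity)]

lemma indicator_ae (u v : ℝ) (f : ℝ → ℂ) :
    (fun x => Set.indicator (Set.Ico u v) f x) =ᵐ[volume]
      (fun x => Set.indicator (Set.Ioc u v) f x) := by
  have hnull : volume ({u, v} : Set ℝ) = 0 :=
    ((Set.finite_singleton v).insert u).measure_zero volume
  filter_upwards [measure_eq_zero_iff_ae_notMem.1 hnull] with x hx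
  simp only [Set.mem_insert_iff, Set.mem_singleton_iff, not_or] at hx
  have hiff : x ∈ Set.Ico u v ↔ x ∈ Set.Ioc u v := by
    constructor
    · rintro ⟨h1, h2⟩; exact ⟨lt_of_le_of_ne h1 (Ne.symm hx.1), h2.le⟩
    · rintro ⟨h1, h2⟩; exact ⟨h1.le, lt_of_le_of_ne h2 hx.2⟩
  by_cases hmem : x ∈ Set.Ioc u v
  · rw [Set.indicator_of_mem (hiff.2 hmem) f, Set.indicator_of_mem hmem f]
  · rw [Set.indicator_of_notMem (fun h => hmem (hiff.1 h)) f, Set.indicator_of_notMem hmem f]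

lemma fHat_eq (b m : ℕ) (hb : 2 ≤ b) (hm : 1 ≤ m) (α γ₁ : ℝ) (ξ : ℕ → ℝ) (k : ℕ) :
    fHat b m α γ₁ ξ k = ((γ₁ * (b : ℝ) ^ (-(α * (m : ℝ))) : ℝ) : ℂ) *
      ∑ a ∈ Finset.range (b ^ m), ((ξ a : ℝ) : ℂ) *
        ∫ x in Set.Ioc ((a : ℝ) / (b : ℝ) ^ m) (((a : ℝ) + 1) / (b : ℝ) ^ m),
          (starRingEnd ℂ) (walsh b k x) := by
  have hbm : (0 : ℝ) < (b : ℝ) ^ m := by positivity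
  set c : ℝ := γ₁ * (b : ℝ) ^ (-(α * (m : ℝ))) with hc
  set w : ℝ → ℂ := fun x => (starRingEnd ℂ) (walsh b k x) with hw
  have hInt : IntegrableOn w (Set.Ioc (0 : ℝ) 1) volume := by
    have h := walsh_intervalIntegrable b k 0 1
    rw [intervalIntegrable_iff, Set.uIoc_of_le (by norm_num : (0:ℝ) ≤ 1)] at h
    exact h
  unfold fHat
  rw [intervalIntegral.integral_of_le (by norm_num : (0:ℝ) ≤ 1)]
  have hpt : ∀ x, ((fStep b m α γ₁ ξ x : ℝ) : ℂ) * w x =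
      ∑ a ∈ Finset.range (b ^ m), ((c * ξ a : ℝ) : ℂ) *
        Set.indicator (Set.Ico ((a : ℝ) / (b : ℝ) ^ m) (((a : ℝ) + 1) / (b : ℝ) ^ m)) w x := by
    intro x
    unfold fStep
    rw [← hc]
    push_cast
    rw [Finset.mul_sum, Finset.sum_mul]
    apply Finset.sum_congr rfl
    intro a _
    by_cases hx : x ∈ Set.Ico ((a : ℝ) / (b : ℝ) ^ m) (((a : ℝ) + 1) / (b : ℝ) ^ m)
    · rw [Set.indicator_of_mem hx, Set.indicator_of_mem hx]
      push_cast
      ring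
    · rw [Set.indicator_of_notMem hx, Set.indicator_of_notMem hx]
      push_cast
      ring
  rw [MeasureTheory.integral_congr_ae (Filter.Eventually.of_forall hpt)]
  rw [MeasureTheory.integral_finset_sum]
  · rw [Finset.mul_sum]
    apply Finset.sum_congr rfl
    intro a ha
    rw [Finset.mem_range] at ha
    set u : ℝ := (a : ℝ) / (b : ℝ) ^ m with hu
    set v : ℝ := ((a : ℝ) + 1) / (b : ℝ) ^ m with hv
    rw [MeasureTheory.integral_const_mul]
    have h1 : ∫ x in Set.Ioc (0:ℝ) 1, Set.indicator (Set.Ico u v) w x =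
        ∫ x in Set.Ioc (0:ℝ) 1, Set.indicator (Set.Ioc u v) w x :=
      MeasureTheory.integral_congr_ae (Filter.EventuallyEq.restrict (indicator_ae u v w))
    have hsub : Set.Ioc u v ∩ Set.Ioc (0:ℝ) 1 = Set.Ioc u v := by
      apply Set.inter_eq_left.2
      intro x hx
      obtain ⟨hx1, hx2⟩ := hx
      constructor
      · have hu0 : (0 : ℝ) ≤ u := by rw [hu]; positivity
        linarith
      · have hv1 : v ≤ 1 := by
          rw [hv, div_le_one hbm]
          have : (a : ℝ) + 1 ≤ ((b : ℝ)) ^ m := by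
            have : ((a + 1 : ℕ) : ℝ) ≤ ((b ^ m : ℕ) : ℝ) := by exact_mod_cast ha
            push_cast at this
            linarith
          linarith
        linarith
    rw [h1, MeasureTheory.integral_indicator measurableSet_Ioc,
      MeasureTheory.Measure.restrict_restrict measurableSet_Ioc, hsub]
    push_cast
    ring
  · intro a _
    apply Integrable.const_mul
    exact (hInt.integrable.indicator measurableSet_Ico)

lemma fHat_val (b m : ℕ) (hb : 2 ≤ b) (hm : 1 ≤ m) (α γ₁ : ℝ) (ξ : ℕ → ℝ) (k : ℕ)
    (hk : k < b ^ m) :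
    fHat b m α γ₁ ξ k = ((γ₁ * (b : ℝ) ^ (-(α * (m : ℝ))) * (((b : ℝ) ^ m)⁻¹) : ℝ) : ℂ) *
      ∑ a ∈ Finset.range (b ^ m), ((ξ a : ℝ) : ℂ) * (starRingEnd ℂ) (ee b (dsum b m k a)) := by
  rw [fHat_eq b m hb hm]
  rw [Finset.mul_sum, Finset.mul_sum]
  apply Finset.sum_congr rfl
  intro a _
  rw [integral_walsh b m k a hb hm hk]
  rw [Complex.real_smul]
  push_cast
  ring

lemma sum_sq_fHat (b m : ℕ) (hb : 2 ≤ b) (hm : 1 ≤ m) (α γ₁ : ℝ) (ξ : ℕ → ℝ)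
    (hξ : ∀ a, ξ a = 1 ∨ ξ a = -1) :
    ∑ k ∈ Finset.range (b ^ m), ‖fHat b m α γ₁ ξ k‖ ^ 2 =
      γ₁ ^ 2 * ((b : ℝ) ^ (-(α * (m : ℝ)))) ^ 2 := by
  have hbm : (0 : ℝ) < (b : ℝ) ^ m := by positivity
  set S : ℕ → ℂ := fun k => ∑ a ∈ Finset.range (b ^ m),
    ((ξ a : ℝ) : ℂ) * (starRingEnd ℂ) (ee b (dsum b m k a)) with hS
  set C : ℝ := γ₁ * (b : ℝ) ^ (-(α * (m : ℝ))) * (((b : ℝ) ^ m)⁻¹) with hC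
  have habs : ∀ k ∈ Finset.range (b ^ m),
      ‖fHat b m α γ₁ ξ k‖ ^ 2 = C ^ 2 * ‖S k‖ ^ 2 := by
    intro k hkr
    rw [Finset.mem_range] at hkr
    rw [fHat_val b m hb hm α γ₁ ξ k hkr, norm_mul, Complex.norm_real, Real.norm_eq_abs, mul_pow, sq_abs]
  rw [Finset.sum_congr rfl habs, ← Finset.mul_sum]
  have hkey : ∑ k ∈ Finset.range (b ^ m), ‖S k‖ ^ 2 =
      ((b : ℝ) ^ m) * ((b : ℝ) ^ m) := by
    have hcplx : ((∑ k ∈ Finset.range (b ^ m), ‖S k‖ ^ 2 : ℝ) : ℂ) =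
        (((b : ℝ) ^ m : ℝ) : ℂ) * (((b : ℝ) ^ m : ℝ) : ℂ) := by
      rw [Complex.ofReal_sum]
      have h1 : ∀ k, ((‖S k‖ ^ 2 : ℝ) : ℂ) = S k * (starRingEnd ℂ) (S k) := by
        intro k
        rw [Complex.sq_norm, Complex.mul_conj]
      calc ∑ k ∈ Finset.range (b ^ m), ((‖S k‖ ^ 2 : ℝ) : ℂ)
          = ∑ k ∈ Finset.range (b ^ m), S k * (starRingEnd ℂ) (S k) := by
            exact Finset.sum_congr rfl fun k _ => h1 k
        _ = ∑ k ∈ Finset.range (b ^ m), ∑ a ∈ Finset.range (b ^ m), ∑ a' ∈ Finset.range (b ^ m),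
              (((ξ a : ℝ) : ℂ) * (starRingEnd ℂ) (ee b (dsum b m k a))) *
              (((ξ a' : ℝ) : ℂ) * (ee b (dsum b m k a'))) := by
            apply Finset.sum_congr rfl
            intro k _
            rw [hS]
            rw [map_sum]
            have hconj : ∀ a' ∈ Finset.range (b ^ m),
                (starRingEnd ℂ) (((ξ a' : ℝ) : ℂ) * (starRingEnd ℂ) (ee b (dsum b m k a'))) =
                ((ξ a' : ℝ) : ℂ) * (ee b (dsum b m k a')) := by
              intro a' _
              rw [map_mul, Complex.conj_conj, Complex.conj_ofReal]
            rw [Finset.sum_congr rfl hconj, Finset.sum_mul_sum]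
        _ = ∑ a ∈ Finset.range (b ^ m), ∑ a' ∈ Finset.range (b ^ m), ∑ k ∈ Finset.range (b ^ m),
              (((ξ a : ℝ) : ℂ) * (starRingEnd ℂ) (ee b (dsum b m k a))) *
              (((ξ a' : ℝ) : ℂ) * (ee b (dsum b m k a'))) := by
            rw [Finset.sum_comm]
            apply Finset.sum_congr rfl
            intro a _
            rw [Finset.sum_comm]
        _ = ∑ a ∈ Finset.range (b ^ m), ∑ a' ∈ Finset.range (b ^ m),
              ((ξ a : ℝ) : ℂ) * ((ξ a' : ℝ) : ℂ) *
              (if a' = a then ((b : ℂ) ^ m) else 0) := by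
            apply Finset.sum_congr rfl; intro a ha
            apply Finset.sum_congr rfl; intro a' ha'
            rw [Finset.mem_range] at ha ha'
            have horth := orth b hb m a' a ha' ha
            calc ∑ k ∈ Finset.range (b ^ m),
                  (((ξ a : ℝ) : ℂ) * (starRingEnd ℂ) (ee b (dsum b m k a))) *
                  (((ξ a' : ℝ) : ℂ) * (ee b (dsum b m k a')))
                = ((ξ a : ℝ) : ℂ) * ((ξ a' : ℝ) : ℂ) *
                  ∑ k ∈ Finset.range (b ^ m),
                    ee b (dsum b m k a') * (starRingEnd ℂ) (ee b (dsum b m k a)) := by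
                  rw [Finset.mul_sum]
                  apply Finset.sum_congr rfl
                  intro k _
                  ring
              _ = _ := by rw [horth]
        _ = (((b : ℝ) ^ m : ℝ) : ℂ) * (((b : ℝ) ^ m : ℝ) : ℂ) := by
            have hdiag : ∀ a ∈ Finset.range (b ^ m),
                (∑ a' ∈ Finset.range (b ^ m), ((ξ a : ℝ) : ℂ) * ((ξ a' : ℝ) : ℂ) *
                  (if a' = a then ((b : ℂ) ^ m) else 0)) = (b : ℂ) ^ m := by
              intro a ha
              rw [Finset.sum_eq_single a]
              · have := hξ a
                rcases this with h | h <;> rw [h] <;> norm_num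
              · intro a' _ hne
                rw [if_neg hne, mul_zero]
              · intro hmem
                exact absurd ha hmem
            rw [Finset.sum_congr rfl hdiag, Finset.sum_const, Finset.card_range]
            push_cast
            ring
    exact_mod_cast hcplx
  rw [hkey, hC]
  field_simp

lemma sum_ee_dsum_zero (b m l k a : ℕ) (hb : 2 ≤ b) (hm : 1 ≤ m) (hml : m < l)
    (hk1 : b ^ (l - 1) ≤ k) (hk2 : k < b ^ l) :
    ∑ r ∈ Finset.range (b ^ (l - m)), ee b (dsum b l k (a * b ^ (l - m) + r)) = 0 := by
  set M := l - m with hM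
  have hlM : l = M + m := by omega
  have hrefl : ∀ c : ℕ, dsum b l k c =
      ∑ p ∈ Finset.range l, (c / b ^ p % b) * (k / b ^ (l - 1 - p) % b) := by
    intro c
    unfold dsum
    rw [← Finset.sum_range_reflect (fun p => (c / b ^ p % b) * (k / b ^ (l - 1 - p) % b)) l]
    apply Finset.sum_congr rfl
    intro i hi
    rw [Finset.mem_range] at hi
    have : l - 1 - (l - 1 - i) = i := by omega
    rw [this]
  have hsplit : ∀ r < b ^ M, dsum b l k (a * b ^ M + r) =
      (∑ p ∈ Finset.range M, (k / b ^ (l - 1 - p) % b) * (r / b ^ p % b)) +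
      (∑ q ∈ Finset.range m, (a / b ^ q % b) * (k / b ^ (l - 1 - (M + q)) % b)) := by
    intro r hr
    rw [hrefl, hlM, Finset.sum_range_add]
    congr 1
    · apply Finset.sum_congr rfl
      intro p hp
      rw [Finset.mem_range] at hp
      rw [digit_low b M p a r (by omega) hp, mul_comm]
    · apply Finset.sum_congr rfl
      intro q _
      have hdiv : (a * b ^ M + r) / b ^ (M + q) = a / b ^ q := by
        rw [pow_add, ← Nat.div_div_eq_div_mul]
        congr 1
        rw [add_comm (a * b ^ M) r, Nat.add_mul_div_right r a (Nat.pow_pos (n := M) (show 0 < b by omega)),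
          Nat.div_eq_of_lt hr, zero_add]
      rw [hdiv]
  have hzero : (∑ r ∈ Finset.range (b ^ M),
      ee b (∑ p ∈ Finset.range M, (k / b ^ (l - 1 - p) % b) * (r / b ^ p % b))) = 0 := by
    rw [prod_formula b hb M (fun p => k / b ^ (l - 1 - p) % b)]
    apply Finset.prod_eq_zero (Finset.mem_range.2 (show 0 < M by omega))
    rw [sum_ee b hb, if_neg]
    have h1 : 1 ≤ k / b ^ (l - 1) := (Nat.one_le_div_iff (Nat.pow_pos (n := l - 1) (show 0 < b by omega))).2 hk1
    have h2 : k / b ^ (l - 1) < b := by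
      rw [Nat.div_lt_iff_lt_mul (Nat.pow_pos (n := l - 1) (show 0 < b by omega))]
      calc k < b ^ l := hk2
        _ = b * b ^ (l - 1) := by rw [← pow_succ']; congr 1; omega

    have : l - 1 - 0 = l - 1 := by omega
    rw [this, Nat.mod_eq_of_lt h2, Nat.mod_eq_of_lt h2]
    omega
  calc ∑ r ∈ Finset.range (b ^ M), ee b (dsum b l k (a * b ^ M + r))
      = ∑ r ∈ Finset.range (b ^ M),
          ee b (∑ p ∈ Finset.range M, (k / b ^ (l - 1 - p) % b) * (r / b ^ p % b)) *
          ee b (∑ q ∈ Finset.range m, (a / b ^ q % b) * (k / b ^ (l - 1 - (M + q)) % b)) := by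
        apply Finset.sum_congr rfl
        intro r hr
        rw [Finset.mem_range] at hr
        rw [hsplit r hr, ee_add]
    _ = (∑ r ∈ Finset.range (b ^ M),
          ee b (∑ p ∈ Finset.range M, (k / b ^ (l - 1 - p) % b) * (r / b ^ p % b))) *
          ee b (∑ q ∈ Finset.range m, (a / b ^ q % b) * (k / b ^ (l - 1 - (M + q)) % b)) := by
        rw [Finset.sum_mul]
    _ = 0 := by rw [hzero, zero_mul]

lemma integral_cell_zero (b m l k a : ℕ) (hb : 2 ≤ b) (hm : 1 ≤ m) (hml : m < l)
    (hk1 : b ^ (l - 1) ≤ k) (hk2 : k < b ^ l) (ha : a < b ^ m) :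
    ∫ x in Set.Ioc ((a : ℝ) / (b : ℝ) ^ m) (((a : ℝ) + 1) / (b : ℝ) ^ m),
      (starRingEnd ℂ) (walsh b k x) = 0 := by
  set M := l - m with hM
  have hlM : l = M + m := by omega
  have hbl : (0 : ℝ) < (b : ℝ) ^ l := by positivity
  set φ : ℕ → ℝ := fun r => ((a * b ^ M + r : ℕ) : ℝ) / (b : ℝ) ^ l with hφ
  have hadj : ∀ r < b ^ M, IntervalIntegrable (fun x => (starRingEnd ℂ) (walsh b k x))
      volume (φ r) (φ (r + 1)) := fun r _ => walsh_intervalIntegrable b k _ _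
  have hmono : ∀ r : ℕ, φ r ≤ φ (r + 1) := by
    intro r
    rw [hφ]
    apply (div_le_div_iff_of_pos_right hbl).2
    exact_mod_cast Nat.le_succ _
  have hsum := intervalIntegral.sum_integral_adjacent_intervals (μ := volume) (a := φ)
    (n := b ^ M) hadj
  have hφ0 : φ 0 = (a : ℝ) / (b : ℝ) ^ m := by
    rw [hφ]
    push_cast
    rw [hlM, pow_add]
    have hbM : (0:ℝ) < (b:ℝ)^M := by positivity
    have hbm : (0:ℝ) < (b:ℝ)^m := by positivity
    field_simp
    ring
  have hφend : φ (b ^ M) = ((a : ℝ) + 1) / (b : ℝ) ^ m := by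
    rw [hφ]
    push_cast
    rw [hlM, pow_add]
    have hbM : (0:ℝ) < (b:ℝ)^M := by positivity
    have hbm : (0:ℝ) < (b:ℝ)^m := by positivity
    field_simp
  have hle : (a : ℝ) / (b : ℝ) ^ m ≤ ((a : ℝ) + 1) / (b : ℝ) ^ m := by
    apply (div_le_div_iff_of_pos_right (by positivity)).2
    linarith
  have heach : ∀ r ∈ Finset.range (b ^ M),
      (∫ x in φ r..φ (r + 1), (starRingEnd ℂ) (walsh b k x)) =
      (((b : ℝ) ^ l)⁻¹ : ℝ) • (starRingEnd ℂ) (ee b (dsum b l k (a * b ^ M + r))) := by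
    intro r _
    rw [intervalIntegral.integral_of_le (hmono r)]
    have hup : φ (r + 1) = (((a * b ^ M + r : ℕ) : ℝ) + 1) / (b : ℝ) ^ l := by
      rw [hφ]
      push_cast
      ring
    have hlo : φ r = ((a * b ^ M + r : ℕ) : ℝ) / (b : ℝ) ^ l := by rw [hφ]
    rw [hlo, hup]
    exact integral_walsh b l k (a * b ^ M + r) hb (by omega) hk2
  calc ∫ x in Set.Ioc ((a : ℝ) / (b : ℝ) ^ m) (((a : ℝ) + 1) / (b : ℝ) ^ m),
        (starRingEnd ℂ) (walsh b k x)
      = ∫ x in (φ 0)..(φ (b ^ M)), (starRingEnd ℂ) (walsh b k x) := by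
        rw [hφ0, hφend, intervalIntegral.integral_of_le hle]
    _ = ∑ r ∈ Finset.range (b ^ M), ∫ x in φ r..φ (r + 1), (starRingEnd ℂ) (walsh b k x) :=
        hsum.symm
    _ = ∑ r ∈ Finset.range (b ^ M),
        (((b : ℝ) ^ l)⁻¹ : ℝ) • (starRingEnd ℂ) (ee b (dsum b l k (a * b ^ M + r))) :=
        Finset.sum_congr rfl heach
    _ = (((b : ℝ) ^ l)⁻¹ : ℝ) • (starRingEnd ℂ)
          (∑ r ∈ Finset.range (b ^ M), ee b (dsum b l k (a * b ^ M + r))) := by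
        rw [map_sum, Finset.smul_sum]
    _ = 0 := by
        rw [sum_ee_dsum_zero b m l k a hb hm hml hk1 hk2, map_zero, smul_zero]

/-- For `b^{m−1} < 2N ≤ bᵐ` and signs `ξ_a ∈ {±1}`, the function
`f = γ₁ b^{−αm} Σ_a ξ_a g_a` satisfies `b^{αl} σ_l(f) ≤ γ₁` for `1 ≤ l ≤ m`,
where `σ_l(f)² = Σ_{b^{l−1}≤k<b^l} |f̂(k)|²`, and `σ_l(f) = 0` for `l > m`. -/
theorem sigma_bound_of_fStep (b : ℕ) (hb : b.Prime) (m : ℕ) (hm : 1 ≤ m)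
    (α γ₁ : ℝ) (hα : 0 < α) (hα1 : α ≤ 1) (hγ : 0 < γ₁)
    (ξ : ℕ → ℝ) (hξ : ∀ a, ξ a = 1 ∨ ξ a = -1)
    (N : ℕ) (hN1 : b ^ (m - 1) < 2 * N) (hN2 : 2 * N ≤ b ^ m) :
    (∀ l : ℕ, 1 ≤ l → l ≤ m →
        (b : ℝ) ^ (α * (l : ℝ)) *
            Real.sqrt (∑ k ∈ Finset.Ico (b ^ (l - 1)) (b ^ l),
              ‖fHat b m α γ₁ ξ k‖ ^ 2) ≤ γ₁) ∧
      ∀ l : ℕ, m < l →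
        ∑ k ∈ Finset.Ico (b ^ (l - 1)) (b ^ l),
          ‖fHat b m α γ₁ ξ k‖ ^ 2 = 0 := by
  have hb2 : 2 ≤ b := hb.two_le
  have hbR : (0 : ℝ) < (b : ℝ) := by exact_mod_cast (by omega : 0 < b)
  constructor
  · intro l hl1 hlm
    set A : ℝ := (b : ℝ) ^ (-(α * (m : ℝ))) with hA
    have hA0 : 0 < A := Real.rpow_pos_of_pos hbR _
    have hsub : Finset.Ico (b ^ (l - 1)) (b ^ l) ⊆ Finset.range (b ^ m) := by
      intro k hk
      rw [Finset.mem_Ico] at hk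
      rw [Finset.mem_range]
      exact lt_of_lt_of_le hk.2 (Nat.pow_le_pow_right (by omega) hlm)
    have hle : (∑ k ∈ Finset.Ico (b ^ (l - 1)) (b ^ l), ‖fHat b m α γ₁ ξ k‖ ^ 2)
        ≤ (γ₁ * A) ^ 2 := by
      calc (∑ k ∈ Finset.Ico (b ^ (l - 1)) (b ^ l), ‖fHat b m α γ₁ ξ k‖ ^ 2)
          ≤ ∑ k ∈ Finset.range (b ^ m), ‖fHat b m α γ₁ ξ k‖ ^ 2 :=
            Finset.sum_le_sum_of_subset_of_nonneg hsub (fun k _ _ => by positivity)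
        _ = γ₁ ^ 2 * A ^ 2 := sum_sq_fHat b m hb2 hm α γ₁ ξ hξ
        _ = (γ₁ * A) ^ 2 := by ring
    have hsq : Real.sqrt (∑ k ∈ Finset.Ico (b ^ (l - 1)) (b ^ l),
        ‖fHat b m α γ₁ ξ k‖ ^ 2) ≤ γ₁ * A := by
      calc Real.sqrt (∑ k ∈ Finset.Ico (b ^ (l - 1)) (b ^ l),
            ‖fHat b m α γ₁ ξ k‖ ^ 2) ≤ Real.sqrt ((γ₁ * A) ^ 2) :=
            Real.sqrt_le_sqrt hle
        _ = γ₁ * A := Real.sqrt_sq (by positivity)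
    have hBl : (0 : ℝ) < (b : ℝ) ^ (α * (l : ℝ)) := Real.rpow_pos_of_pos hbR _
    calc (b : ℝ) ^ (α * (l : ℝ)) * Real.sqrt (∑ k ∈ Finset.Ico (b ^ (l - 1)) (b ^ l),
          ‖fHat b m α γ₁ ξ k‖ ^ 2)
        ≤ (b : ℝ) ^ (α * (l : ℝ)) * (γ₁ * A) := mul_le_mul_of_nonneg_left hsq hBl.le
      _ = γ₁ * ((b : ℝ) ^ (α * (l : ℝ)) * A) := by ring
      _ ≤ γ₁ * 1 := by
          apply mul_le_mul_of_nonneg_left ?_ hγ.le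
          rw [hA, ← Real.rpow_add hbR]
          apply Real.rpow_le_one_of_one_le_of_nonpos
          · exact_mod_cast (by omega : 1 ≤ b)
          · have hlmR : (l : ℝ) ≤ (m : ℝ) := by exact_mod_cast hlm
            nlinarith
      _ = γ₁ := mul_one γ₁
  · intro l hml
    apply Finset.sum_eq_zero
    intro k hk
    rw [Finset.mem_Ico] at hk
    have hz : fHat b m α γ₁ ξ k = 0 := by
      rw [fHat_eq b m hb2 hm]
      have hz2 : (∑ a ∈ Finset.range (b ^ m), ((ξ a : ℝ) : ℂ) *
          ∫ x in Set.Ioc ((a : ℝ) / (b : ℝ) ^ m) (((a : ℝ) + 1) / (b : ℝ) ^ m),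
            (starRingEnd ℂ) (walsh b k x)) = 0 := by
        apply Finset.sum_eq_zero
        intro a ha
        rw [Finset.mem_range] at ha
        rw [integral_cell_zero b m l k a hb2 hm hml hk.1 hk.2 ha, mul_zero]
      rw [hz2, mul_zero]
    rw [hz]
    simp
end
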